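/- arXiv:1703.03908 — 3 statements merged into one kernel-verified Lean document; each statement's English description precedes it below -/
import Mathlib

section
/- Let B : ℝ → Mat(2n,ℝ) be continuous with B(t) symmetric for every t ∈ ℝ, and let v, w : ℝ → ℝ^{2n} be differentiable solutions of z'(t) = J B(t) z(t). If v(t) → 0 and w(t) → 0 as t → +∞ (or, alternatively, as t → −∞), then ω(v(τ), w(τ)) = 0 for every τ ∈ ℝ. In particular, for every τ ∈ ℝ the stable subspace E^s(τ) and the unstable subspace E^u(τ) of the system z' = J B(t) z are isotropic subspaces of (ℝ^{2n}, ω). -/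
open Matrix Filter Topology

/-- The standard complex structure `J = [[0, -Iₙ],[Iₙ, 0]]` on `ℝ^{2n}`. -/
noncomputable def Jmat (n : ℕ) : Matrix (Fin (2*n)) (Fin (2*n)) ℝ :=
  Matrix.reindex (finSumFinEquiv.trans (finCongr (two_mul n).symm))
    (finSumFinEquiv.trans (finCongr (two_mul n).symm))
    (Matrix.fromBlocks 0 (-1) 1 0)

/-- The standard symplectic form `ω(u,v) = ⟨Ju, v⟩` on `ℝ^{2n}`. -/
noncomputable def symplForm (n : ℕ) (u v : Fin (2*n) → ℝ) : ℝ :=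
  (Jmat n) *ᵥ u ⬝ᵥ v

/-- The stable subspace `E^s(τ)` of `z' = S(t) z`, described through the fundamental
solution `γ τ` normalized by `γ τ τ = 1`. -/
def stableSet {m : ℕ} (γ : ℝ → ℝ → Matrix (Fin m) (Fin m) ℝ) (τ : ℝ) :
    Set (Fin m → ℝ) :=
  {v | Tendsto (fun t => γ τ t *ᵥ v) atTop (nhds 0)}

/-- The unstable subspace `E^u(τ)` of `z' = S(t) z`. -/
def unstableSet {m : ℕ} (γ : ℝ → ℝ → Matrix (Fin m) (Fin m) ℝ) (τ : ℝ) :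
    Set (Fin m → ℝ) :=
  {v | Tendsto (fun t => γ τ t *ᵥ v) atBot (nhds 0)}

/-!
For symmetric `B` the matrix `J B` is infinitesimally symplectic, so `t ↦ ω(v t, w t)` has zero
derivative for any two solutions of `z' = J B(t) z` and is therefore constant. If both solutions
tend to `0` along `t → ±∞`, that constant is a limit of `ω(v t, w t) → ω(0, 0) = 0`.
-/

lemma Jmat_mul_self (n : ℕ) : Jmat n * Jmat n = -1 := by
  simp only [Jmat, reindex_apply, submatrix_mul_equiv, fromBlocks_multiply]
  have : (fromBlocks (0 * 0 + (-1) * 1) (0 * (-1) + (-1) * 0) (1 * 0 + 0 * 1) (1 * (-1) + 0 * 0) :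
      Matrix (Fin n ⊕ Fin n) (Fin n ⊕ Fin n) ℝ) = -1 := by
    simp [← fromBlocks_one, fromBlocks_neg]
  rw [this]
  ext i j
  simp [one_apply, Fin.ext_iff]

lemma Jmat_transpose (n : ℕ) : (Jmat n)ᵀ = -Jmat n := by
  have h : (fromBlocks 0 (-1) 1 0 : Matrix (Fin n ⊕ Fin n) (Fin n ⊕ Fin n) ℝ)ᵀ =
      -fromBlocks 0 (-1) 1 0 := by
    simp [fromBlocks_transpose, fromBlocks_neg]
  simp only [Jmat, reindex_apply, transpose_submatrix, h]
  rfl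

lemma symplForm_mulVec_add_symplForm_mulVec {n : ℕ} {B : Matrix (Fin (2*n)) (Fin (2*n)) ℝ}
    (hB : B.IsSymm) (u w : Fin (2*n) → ℝ) :
    symplForm n ((Jmat n * B) *ᵥ u) w + symplForm n u ((Jmat n * B) *ᵥ w) = 0 := by
  have hJJB : Jmat n * (Jmat n * B) = -B := by
    rw [← Matrix.mul_assoc, Jmat_mul_self, Matrix.neg_mul, Matrix.one_mul]
  have hJtJB : (Jmat n)ᵀ * (Jmat n * B) = B := by
    rw [Jmat_transpose, Matrix.neg_mul, hJJB, neg_neg]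
  have h₁ : symplForm n ((Jmat n * B) *ᵥ u) w = -((B *ᵥ u) ⬝ᵥ w) := by
    rw [symplForm, mulVec_mulVec, hJJB, neg_mulVec, neg_dotProduct]
  have h₂ : symplForm n u ((Jmat n * B) *ᵥ w) = (B *ᵥ u) ⬝ᵥ w := by
    rw [symplForm, dotProduct_mulVec, ← vecMul_transpose, vecMul_vecMul, hJtJB, ← hB.eq,
      vecMul_transpose, hB.eq]
  rw [h₁, h₂, neg_add_cancel]

noncomputable def symplFormCLM (n : ℕ) : (Fin (2*n) → ℝ) →L[ℝ] (Fin (2*n) → ℝ) →L[ℝ] ℝ :=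
  (Matrix.toLinearMap₂' ℝ (Jmat n)ᵀ).toContinuousBilinearMap

lemma symplFormCLM_apply (n : ℕ) (u w : Fin (2*n) → ℝ) :
    symplFormCLM n u w = symplForm n u w := by
  rw [symplFormCLM, LinearMap.toContinuousBilinearMap_apply, toLinearMap₂'_apply',
    dotProduct_mulVec, vecMul_transpose, symplForm]

lemma HasDerivAt.symplForm {n : ℕ} {v w : ℝ → Fin (2*n) → ℝ} {v' w' : Fin (2*n) → ℝ} {t : ℝ}
    (hv : HasDerivAt v v' t) (hw : HasDerivAt w w' t) :
    HasDerivAt (fun s => symplForm n (v s) (w s))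
      (symplForm n (v t) w' + symplForm n v' (w t)) t := by
  simpa only [symplFormCLM_apply] using
    (symplFormCLM n).hasDerivAt_of_bilinear (fun _ => hv) (fun _ => hw)

lemma Filter.Tendsto.symplForm {α : Type*} {n : ℕ} {l : Filter α} {v w : α → Fin (2*n) → ℝ}
    {a b : Fin (2*n) → ℝ} (hv : Tendsto v l (𝓝 a)) (hw : Tendsto w l (𝓝 b)) :
    Tendsto (fun s => symplForm n (v s) (w s)) l (𝓝 (symplForm n a b)) := by
  simpa only [symplFormCLM_apply, Function.comp_def, Function.uncurry_apply_pair] using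
    ((symplFormCLM n).continuous₂.tendsto (a, b)).comp (hv.prodMk_nhds hw)

lemma symplForm_eq_of_hasDerivAt_hamiltonian {n : ℕ} {B : ℝ → Matrix (Fin (2*n)) (Fin (2*n)) ℝ}
    (hB : ∀ t, (B t).IsSymm) {v w : ℝ → Fin (2*n) → ℝ}
    (hv : ∀ t, HasDerivAt v ((Jmat n * B t) *ᵥ v t) t)
    (hw : ∀ t, HasDerivAt w ((Jmat n * B t) *ᵥ w t) t) (s t : ℝ) :
    symplForm n (v s) (w s) = symplForm n (v t) (w t) := by
  have hderiv : ∀ t, HasDerivAt (fun s => symplForm n (v s) (w s)) 0 t := fun t => by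
    simpa only [add_comm, symplForm_mulVec_add_symplForm_mulVec (hB t)] using
      (hv t).symplForm (hw t)
  exact is_const_of_deriv_eq_zero (fun t => (hderiv t).differentiableAt)
    (fun t => (hderiv t).deriv) s t

lemma symplForm_eq_zero_of_tendsto {n : ℕ} {B : ℝ → Matrix (Fin (2*n)) (Fin (2*n)) ℝ}
    (hB : ∀ t, (B t).IsSymm) {v w : ℝ → Fin (2*n) → ℝ}
    (hv : ∀ t, HasDerivAt v ((Jmat n * B t) *ᵥ v t) t)
    (hw : ∀ t, HasDerivAt w ((Jmat n * B t) *ᵥ w t) t) {l : Filter ℝ} [l.NeBot]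
    (hvl : Tendsto v l (𝓝 0)) (hwl : Tendsto w l (𝓝 0)) (τ : ℝ) :
    symplForm n (v τ) (w τ) = 0 := by
  have hconst : Tendsto (fun t => symplForm n (v t) (w t)) l (𝓝 (symplForm n (v τ) (w τ))) :=
    tendsto_const_nhds.congr fun t => symplForm_eq_of_hasDerivAt_hamiltonian hB hv hw τ t
  have hzero : Tendsto (fun t => symplForm n (v t) (w t)) l (𝓝 0) := by
    simpa [symplForm] using hvl.symplForm hwl
  exact tendsto_nhds_unique hconst hzero

theorem stmt1_general (n : ℕ) (B : ℝ → Matrix (Fin (2*n)) (Fin (2*n)) ℝ)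
    (hBsymm : ∀ t, (B t).IsSymm) :
    (∀ v w : ℝ → Fin (2*n) → ℝ,
      (∀ t, HasDerivAt v ((Jmat n * B t) *ᵥ v t) t) →
      (∀ t, HasDerivAt w ((Jmat n * B t) *ᵥ w t) t) →
      ((Tendsto v atTop (nhds 0) ∧ Tendsto w atTop (nhds 0)) ∨
       (Tendsto v atBot (nhds 0) ∧ Tendsto w atBot (nhds 0))) →
      ∀ τ : ℝ, symplForm n (v τ) (w τ) = 0) ∧
    (∀ γ : ℝ → ℝ → Matrix (Fin (2*n)) (Fin (2*n)) ℝ,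
      (∀ τ, γ τ τ = 1) →
      (∀ τ (u : Fin (2*n) → ℝ) t,
        HasDerivAt (fun s => γ τ s *ᵥ u) ((Jmat n * B t) *ᵥ (γ τ t *ᵥ u)) t) →
      ∀ τ : ℝ,
        (∀ u ∈ stableSet γ τ, ∀ w ∈ stableSet γ τ, symplForm n u w = 0) ∧
        (∀ u ∈ unstableSet γ τ, ∀ w ∈ unstableSet γ τ, symplForm n u w = 0)) := by
  refine ⟨fun v w hv hw hlim τ => ?_, fun γ hγ hγ' τ => ⟨?_, ?_⟩⟩
  · rcases hlim with ⟨hvl, hwl⟩ | ⟨hvl, hwl⟩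
    · exact symplForm_eq_zero_of_tendsto hBsymm hv hw hvl hwl τ
    · exact symplForm_eq_zero_of_tendsto hBsymm hv hw hvl hwl τ
  all_goals
    intro u hu w hw
    simpa [hγ τ] using symplForm_eq_zero_of_tendsto hBsymm (hγ' τ u) (hγ' τ w) hu hw τ

/-- If `v, w` are solutions of `z' = J B(t) z` which both tend to `0` as `t → +∞`
(or alternatively both as `t → -∞`), then `ω(v τ, w τ) = 0` for every `τ`.  In particular,
the stable and unstable subspaces `E^s(τ)`, `E^u(τ)` are isotropic subspaces of
`(ℝ^{2n}, ω)` for every `τ`. -/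
theorem stmt1 (n : ℕ) (B : ℝ → Matrix (Fin (2*n)) (Fin (2*n)) ℝ)
    (hBcont : Continuous B) (hBsymm : ∀ t, (B t).IsSymm) :
    (∀ v w : ℝ → Fin (2*n) → ℝ,
      (∀ t, HasDerivAt v ((Jmat n * B t) *ᵥ v t) t) →
      (∀ t, HasDerivAt w ((Jmat n * B t) *ᵥ w t) t) →
      ((Tendsto v atTop (nhds 0) ∧ Tendsto w atTop (nhds 0)) ∨
       (Tendsto v atBot (nhds 0) ∧ Tendsto w atBot (nhds 0))) →
      ∀ τ : ℝ, symplForm n (v τ) (w τ) = 0) ∧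
    (∀ γ : ℝ → ℝ → Matrix (Fin (2*n)) (Fin (2*n)) ℝ,
      (∀ τ, γ τ τ = 1) →
      (∀ τ (u : Fin (2*n) → ℝ) t,
        HasDerivAt (fun s => γ τ s *ᵥ u) ((Jmat n * B t) *ᵥ (γ τ t *ᵥ u)) t) →
      ∀ τ : ℝ,
        (∀ u ∈ stableSet γ τ, ∀ w ∈ stableSet γ τ, symplForm n u w = 0) ∧
        (∀ u ∈ unstableSet γ τ, ∀ w ∈ unstableSet γ τ, symplForm n u w = 0)) :=
  stmt1_general n B hBsymm
end

section
/- Let S ∈ Mat(2n,ℝ) be a Hamiltonian matrix which is hyperbolic. Then V^+(S) = {v ∈ ℝ^{2n} : exp(tS)v → 0 as t → −∞} is a Lagrangian subspace of (ℝ^{2n}, ω), and ℝ^{2n} decomposes as the direct sum ℝ^{2n} = V^−(S) ⊕ V^+(S): the two subspaces intersect trivially and together span ℝ^{2n}. -/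
open Matrix Filter Topology

/-- A real matrix is hyperbolic if no eigenvalue of its complexification is purely imaginary. -/
def IsHyperbolic {d : ℕ} (T : Matrix (Fin d) (Fin d) ℝ) : Prop :=
  ∀ μ : ℂ, Module.End.HasEigenvalue (Matrix.toLin' (T.map Complex.ofReal)) μ → μ.re ≠ 0

/-- `V⁻(T)`: vectors whose trajectory under `exp(tT)` tends to `0` as `t → +∞`. -/
def negSpace (d : ℕ) (T : Matrix (Fin d) (Fin d) ℝ) : Submodule ℝ (Fin d → ℝ) where
  carrier := {v | Tendsto (fun t : ℝ => NormedSpace.exp (t • T) *ᵥ v) atTop (nhds 0)}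
  add_mem' := by
    intro a b ha hb
    simpa [Matrix.mulVec_add] using ha.add hb
  zero_mem' := by
    simpa [Matrix.mulVec_zero] using
      (tendsto_const_nhds : Tendsto (fun _ : ℝ => (0 : Fin d → ℝ)) atTop (nhds 0))
  smul_mem' := by
    intro c a ha
    simpa [Matrix.mulVec_smul] using ha.const_smul c

/-- `V⁺(T)`: vectors whose trajectory under `exp(tT)` tends to `0` as `t → -∞`. -/
def posSpace (d : ℕ) (T : Matrix (Fin d) (Fin d) ℝ) : Submodule ℝ (Fin d → ℝ) where
  carrier := {v | Tendsto (fun t : ℝ => NormedSpace.exp (t • T) *ᵥ v) atBot (nhds 0)}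
  add_mem' := by
    intro a b ha hb
    simpa [Matrix.mulVec_add] using ha.add hb
  zero_mem' := by
    simpa [Matrix.mulVec_zero] using
      (tendsto_const_nhds : Tendsto (fun _ : ℝ => (0 : Fin d → ℝ)) atBot (nhds 0))
  smul_mem' := by
    intro c a ha
    simpa [Matrix.mulVec_smul] using ha.const_smul c

/-!
Since `S` is Hamiltonian, each `exp (t • S)` is symplectic, so for `u, v` both in `V⁻(S)` or both
in `V⁺(S)` the constant `ω(u, v) = ω(exp(tS) u, exp(tS) v)` tends to `0`: both spaces are
isotropic, hence of dimension at most `n`. Over `ℂ` the generalized eigenspaces of `S` span, and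
hyperbolicity sorts them into those with `Re μ < 0`, on which `exp(tS) = e^{tμ} · (polynomial in t)`
decays as `t → +∞`, and those with `Re μ > 0`, decaying as `t → -∞`; real parts give
`V⁻ + V⁺ = ℝ^{2n}`. A vector `v` in `V⁻ ∩ V⁺` vanishes, because `v = exp(-tS) (exp(tS) v)`, where
`exp(tS) v → 0` inside the finite-dimensional invariant space `V⁺`, on which `exp(-tS) → 0`.
Counting dimensions, `V⁻` and `V⁺` are both Lagrangian.
-/

open NormedSpace Finset
open scoped Nat

-- Any Banach-algebra norm will do: `exp` depends only on the topology of the matrices.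
attribute [local instance] Matrix.linftyOpNormedRing Matrix.linftyOpNormedAlgebra

variable {ι : Type*} [Fintype ι] [DecidableEq ι]

theorem Matrix.exp_mulVec_eq_sum_of_pow_mulVec_eq_zero {𝕂 : Type*} [RCLike 𝕂]
    (N : Matrix ι ι 𝕂) {k : ℕ} {w : ι → 𝕂} (hw : (N ^ k) *ᵥ w = 0) :
    exp N *ᵥ w = ∑ j ∈ range k, (j ! : 𝕂)⁻¹ • (N ^ j *ᵥ w) := by
  have hmap := (exp_series_hasSum_exp' (𝕂 := 𝕂) N).map (mulVec.addMonoidHomLeft w)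
    (continuous_id.matrix_mulVec continuous_const)
  refine hmap.unique (hasSum_sum_of_ne_finset_zero (s := range k) fun j hj => ?_) |>.trans ?_
  · simp only [Function.comp_apply, mulVec.addMonoidHomLeft, AddMonoidHom.coe_mk, ZeroHom.coe_mk]
    rw [← pow_sub_mul_pow N (not_lt.mp (mem_range.not.mp hj)), smul_mulVec, ← mulVec_mulVec, hw,
      mulVec_zero, smul_zero]
  · exact sum_congr rfl fun j _ => smul_mulVec _ _ _

theorem Matrix.exp_smul_one {𝕂 : Type*} [RCLike 𝕂] (c : 𝕂) :
    exp (c • (1 : Matrix ι ι 𝕂)) = exp c • 1 := by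
  rw [← Algebra.algebraMap_eq_smul_one, ← Algebra.algebraMap_eq_smul_one, algebraMap_exp_comm]
  rfl

theorem Matrix.exists_exp_smul_mulVec_eq_sum (M : Matrix ι ι ℂ) {μ : ℂ} {w : ι → ℂ}
    (hw : w ∈ Module.End.maxGenEigenspace (toLin' M) μ) :
    ∃ (k : ℕ) (c : ℕ → ι → ℂ), ∀ t : ℝ,
      exp (t • M) *ᵥ w = ∑ j ∈ range k, (Complex.exp (t * μ) * t ^ j) • c j := by
  obtain ⟨k, hk⟩ := (Module.End.mem_maxGenEigenspace _ _ _).mp hw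
  set N := M - μ • 1
  have hNk : (N ^ k) *ᵥ w = 0 := by
    have hN : toLin' M - μ • 1 = toLinAlgEquiv' N := by rw [map_sub, map_smul, map_one]; rfl
    rwa [hN, ← map_pow, toLinAlgEquiv'_apply] at hk
  refine ⟨k, fun j => (j ! : ℂ)⁻¹ • (N ^ j *ᵥ w), fun t => ?_⟩
  have hsplit : (t : ℂ) • M = ((t : ℂ) * μ) • 1 + (t : ℂ) • N := by
    simp only [N, smul_sub, smul_smul]; abel
  have hcomm : Commute (((t : ℂ) * μ) • (1 : Matrix ι ι ℂ)) ((t : ℂ) • N) :=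
    ((Commute.one_left N).smul_left _).smul_right _
  have hnil : ((t : ℂ) • N) ^ k *ᵥ w = 0 := by rw [smul_pow, smul_mulVec, hNk, smul_zero]
  rw [← Complex.coe_smul, hsplit, exp_add_of_commute _ _ hcomm, exp_smul_one, smul_mul_assoc,
    one_mul, smul_mulVec, exp_mulVec_eq_sum_of_pow_mulVec_eq_zero _ hnil, smul_sum,
    ← Complex.exp_eq_exp_ℂ]
  refine sum_congr rfl fun j _ => ?_
  rw [smul_pow, smul_mulVec, smul_smul, smul_smul, smul_smul]
  ring_nf

theorem tendsto_abs_pow_mul_exp_atBot (j : ℕ) :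
    Tendsto (fun s : ℝ => |s| ^ j * Real.exp s) atBot (𝓝 0) := by
  have h := ((Real.tendsto_pow_mul_exp_neg_atTop_nhds_zero j).comp tendsto_neg_atBot_atTop).norm
  simpa [Function.comp_def, abs_mul, Real.abs_exp] using h

theorem Complex.tendsto_exp_mul_mul_pow {μ : ℂ} (hμ : μ.re ≠ 0) {l : Filter ℝ}
    (hl : Tendsto (fun t => t * μ.re) l atBot) (j : ℕ) :
    Tendsto (fun t : ℝ => Complex.exp (t * μ) * t ^ j) l (𝓝 0) := by
  rw [tendsto_zero_iff_norm_tendsto_zero]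
  have h := ((tendsto_abs_pow_mul_exp_atBot j).comp hl).const_mul (|μ.re| ^ j)⁻¹
  rw [mul_zero] at h
  refine h.congr fun t => ?_
  simp only [Function.comp_apply, norm_mul, norm_pow, Complex.norm_exp, Complex.re_ofReal_mul,
    Complex.norm_real, Real.norm_eq_abs, abs_mul, mul_pow]
  field_simp

def Matrix.decaySubmodule (M : Matrix ι ι ℂ) (l : Filter ℝ) : Submodule ℂ (ι → ℂ) where
  carrier := {w | Tendsto (fun t : ℝ => exp (t • M) *ᵥ w) l (𝓝 0)}
  add_mem' ha hb := by
    simpa only [Set.mem_ofPred_eq, mulVec_add, add_zero] using ha.add hb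
  zero_mem' := by simpa only [Set.mem_ofPred_eq, mulVec_zero] using tendsto_const_nhds
  smul_mem' c _ ha := by
    simpa only [Set.mem_ofPred_eq, mulVec_smul, smul_zero] using ha.const_smul c

theorem Matrix.maxGenEigenspace_le_decaySubmodule (M : Matrix ι ι ℂ) {μ : ℂ} (hμ : μ.re ≠ 0)
    {l : Filter ℝ} (hl : Tendsto (fun t => t * μ.re) l atBot) :
    Module.End.maxGenEigenspace (toLin' M) μ ≤ M.decaySubmodule l := by
  intro w hw
  obtain ⟨k, c, hc⟩ := M.exists_exp_smul_mulVec_eq_sum hw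
  have h := tendsto_finsetSum (range k) fun j _ =>
    (Complex.tendsto_exp_mul_mul_pow hμ hl j).smul_const (c j)
  simp only [zero_smul, sum_const_zero] at h
  exact (tendsto_congr hc).mpr h

theorem Matrix.decaySubmodule_sup_eq_top {M : Matrix ι ι ℂ}
    (hM : ∀ μ : ℂ, Module.End.HasEigenvalue (toLin' M) μ → μ.re ≠ 0) :
    M.decaySubmodule atTop ⊔ M.decaySubmodule atBot = ⊤ := by
  rw [eq_top_iff, ← Module.End.iSup_maxGenEigenspace_eq_top]
  refine iSup_le fun μ => ?_
  rcases lt_trichotomy μ.re 0 with hlt | heq | hgt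
  · exact (M.maxGenEigenspace_le_decaySubmodule hlt.ne
      (tendsto_id.atTop_mul_const_of_neg hlt)).trans le_sup_left
  · have hbot : Module.End.maxGenEigenspace (toLin' M) μ = ⊥ := by
      by_contra hne
      rw [Module.End.maxGenEigenspace_eq] at hne
      exact hM μ (Module.End.hasEigenvalue_of_hasGenEigenvalue hne) heq
    exact hbot.le.trans bot_le
  · exact (M.maxGenEigenspace_le_decaySubmodule hgt.ne'
      (tendsto_id.atBot_mul_const hgt)).trans le_sup_right

theorem Matrix.exp_smul_map_ofReal (T : Matrix ι ι ℝ) (t : ℝ) :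
    exp (t • T.map Complex.ofReal) = (exp (t • T)).map Complex.ofReal := by
  have hcont : Continuous (Complex.ofRealHom.mapMatrix : Matrix ι ι ℝ →+* Matrix ι ι ℂ) :=
    continuous_id.matrix_map Complex.continuous_ofReal
  have h := map_exp _ hcont (t • T)
  have hsmul : Complex.ofRealHom.mapMatrix (t • T) = t • T.map Complex.ofReal := by
    ext i j
    simp [Complex.real_smul]
  rw [hsmul] at h
  exact h.symm

theorem Matrix.re_map_ofReal_mulVec {m n : Type*} [Fintype n] (T : Matrix m n ℝ) (a : n → ℂ) :
    (fun i => ((T.map Complex.ofReal *ᵥ a) i).re) = T *ᵥ fun i => (a i).re := by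
  ext i
  simp [mulVec, dotProduct, Complex.re_sum]

theorem Matrix.tendsto_exp_smul_mulVec_re {T : Matrix ι ι ℝ} {a : ι → ℂ} {l : Filter ℝ}
    (ha : a ∈ (T.map Complex.ofReal).decaySubmodule l) :
    Tendsto (fun t : ℝ => exp (t • T) *ᵥ fun i => (a i).re) l (𝓝 0) := by
  have hre : Continuous fun w : ι → ℂ => fun i => (w i).re := by fun_prop
  have h := (hre.tendsto 0).comp ha
  simp only [Pi.zero_apply, Complex.zero_re] at h
  refine h.congr fun t => ?_
  rw [Function.comp_apply, exp_smul_map_ofReal, re_map_ofReal_mulVec]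

theorem tendsto_apply_apply_of_tendsto_apply {α 𝕜 W E : Type*} [NontriviallyNormedField 𝕜]
    [CompleteSpace 𝕜] [NormedAddCommGroup W] [NormedSpace 𝕜 W] [FiniteDimensional 𝕜 W]
    [AddCommGroup E] [Module 𝕜 E] [TopologicalSpace E] [IsTopologicalAddGroup E]
    [ContinuousSMul 𝕜 E] {l : Filter α} {L : α → W →ₗ[𝕜] E}
    (hL : ∀ x, Tendsto (fun a => L a x) l (𝓝 0)) {y : α → W} (hy : Tendsto y l (𝓝 0)) :
    Tendsto (fun a => L a (y a)) l (𝓝 0) := by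
  let b := Module.finBasis 𝕜 W
  have hexpand : ∀ a, L a (y a) = ∑ i, b.repr (y a) i • L a (b i) := fun a => by
    conv_lhs => rw [← b.sum_repr (y a)]
    simp only [map_sum, map_smul]
  have hcoord : ∀ i, Tendsto (fun a => b.repr (y a) i) l (𝓝 0) := fun i => by
    have hcont : Continuous (b.coord i) := LinearMap.continuous_of_finiteDimensional _
    simpa [Function.comp_def] using (hcont.tendsto 0).comp hy
  have h := tendsto_finsetSum univ fun i _ => (hcoord i).smul (hL (b i))
  simp only [zero_smul, sum_const_zero] at h
  exact (tendsto_congr hexpand).mpr h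

variable {d : ℕ}

theorem exp_smul_mulVec_mem_posSpace (T : Matrix (Fin d) (Fin d) ℝ) (s : ℝ) {v : Fin d → ℝ}
    (hv : v ∈ posSpace d T) : exp (s • T) *ᵥ v ∈ posSpace d T := by
  have h : Tendsto (fun t : ℝ => exp ((t + s) • T) *ᵥ v) atBot (𝓝 0) :=
    hv.comp (tendsto_atBot_add_const_right _ s tendsto_id)
  refine h.congr fun t => ?_
  rw [mulVec_mulVec, ← exp_add_of_commute _ _ ((Commute.refl T).smul_left t |>.smul_right s),
    add_smul]

theorem negSpace_inf_posSpace (T : Matrix (Fin d) (Fin d) ℝ) :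
    negSpace d T ⊓ posSpace d T = ⊥ := by
  rw [eq_bot_iff]
  rintro v ⟨hneg, hpos⟩
  let L : ℝ → posSpace d T →ₗ[ℝ] (Fin d → ℝ) := fun t =>
    (mulVecLin (exp ((-t) • T))).comp (posSpace d T).subtype
  let u : ℝ → posSpace d T := fun t => ⟨exp (t • T) *ᵥ v, exp_smul_mulVec_mem_posSpace T t hpos⟩
  have hL : ∀ x, Tendsto (fun t => L t x) atTop (𝓝 0) := fun x =>
    x.2.comp tendsto_neg_atTop_atBot
  have hu : Tendsto u atTop (𝓝 0) := tendsto_subtype_rng.mpr hneg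
  have hLu : ∀ t, L t (u t) = v := fun t => by
    simp only [L, u, LinearMap.comp_apply, Submodule.subtype_apply, mulVecLin_apply,
      mulVec_mulVec]
    rw [← exp_add_of_commute _ _ ((Commute.refl T).smul_left _ |>.smul_right t), ← add_smul,
      neg_add_cancel, zero_smul, exp_zero, one_mulVec]
  have h := tendsto_apply_apply_of_tendsto_apply hL hu
  simp only [hLu] at h
  exact tendsto_nhds_unique tendsto_const_nhds h

theorem negSpace_sup_posSpace {T : Matrix (Fin d) (Fin d) ℝ} (hT : IsHyperbolic T) :
    negSpace d T ⊔ posSpace d T = ⊤ := by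
  rw [eq_top_iff]
  intro v _
  have hv : (fun i => (v i : ℂ)) ∈ (T.map Complex.ofReal).decaySubmodule atTop ⊔
      (T.map Complex.ofReal).decaySubmodule atBot := by
    rw [decaySubmodule_sup_eq_top hT]; trivial
  obtain ⟨a, ha, b, hb, hab⟩ := Submodule.mem_sup.mp hv
  have hre : v = (fun i => (a i).re) + fun i => (b i).re := funext fun i => by
    simpa using congrArg Complex.re (congrFun hab i).symm
  rw [hre]
  exact Submodule.add_mem_sup (tendsto_exp_smul_mulVec_re ha) (tendsto_exp_smul_mulVec_re hb)

theorem LinearMap.BilinForm.finrank_add_finrank_le_of_isotropic {K V : Type*} [Field K]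
    [AddCommGroup V] [Module K V] [FiniteDimensional K V] {B : LinearMap.BilinForm K V}
    (hB : B.Nondegenerate) {W : Submodule K V} (hW : ∀ x ∈ W, ∀ y ∈ W, B x y = 0) :
    Module.finrank K W + Module.finrank K W ≤ Module.finrank K V := by
  have hle : W ≤ B.orthogonal W := fun y hy x hx => hW x hx y hy
  have h := Submodule.finrank_mono hle
  rw [finrank_orthogonal hB] at h
  have := W.finrank_le
  omega

theorem Matrix.transpose_exp_mul_mul_exp {J S : Matrix ι ι ℝ} (hS : Sᵀ * J + J * S = 0) :
    (exp S)ᵀ * J * exp S = J := by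
  have hsemi : SemiconjBy J S (-Sᵀ) := by
    rw [SemiconjBy, neg_mul, eq_neg_iff_add_eq_zero, add_comm, hS]
  have h := hsemi.exp_neg_mul_mul_exp_eq_self
  rw [neg_neg] at h
  rw [← exp_transpose]
  exact h

variable {n : ℕ}

theorem det_Jmat_ne_zero : (Jmat n).det ≠ 0 :=
  (det_reindex_self _ (J (Fin n) ℝ)).trans_ne (isUnit_det_J (Fin n) ℝ).ne_zero

theorem symplForm_eq_toBilin' (u v : Fin (2 * n) → ℝ) :
    symplForm n u v = (Jmat n)ᵀ.toBilin' u v := by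
  rw [symplForm, toBilin'_apply', mulVec_transpose, dotProduct_comm (Jmat n *ᵥ u),
    dotProduct_mulVec, dotProduct_comm]

theorem finrank_add_finrank_le_of_isotropic {E : Submodule ℝ (Fin (2 * n) → ℝ)}
    (hE : ∀ u ∈ E, ∀ v ∈ E, symplForm n u v = 0) :
    Module.finrank ℝ E + Module.finrank ℝ E ≤ 2 * n := by
  have hB : (Jmat n)ᵀ.toBilin'.Nondegenerate := by
    rw [LinearMap.BilinForm.nondegenerate_toBilin'_iff_det_ne_zero, det_transpose]
    exact det_Jmat_ne_zero
  simpa using LinearMap.BilinForm.finrank_add_finrank_le_of_isotropic hB fun u hu v hv =>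
    (symplForm_eq_toBilin' u v).symm.trans (hE u hu v hv)

theorem symplForm_mulVec_mulVec {A : Matrix (Fin (2 * n)) (Fin (2 * n)) ℝ}
    (hA : Aᵀ * Jmat n * A = Jmat n) (u v : Fin (2 * n) → ℝ) :
    symplForm n (A *ᵥ u) (A *ᵥ v) = symplForm n u v := by
  rw [symplForm, symplForm, dotProduct_mulVec, ← mulVec_transpose, mulVec_mulVec, mulVec_mulVec,
    hA]

theorem symplForm_eq_zero_of_tendsto_s3 {S : Matrix (Fin (2 * n)) (Fin (2 * n)) ℝ}
    (hS : Sᵀ * Jmat n + Jmat n * S = 0) {l : Filter ℝ} [l.NeBot] {u v : Fin (2 * n) → ℝ}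
    (hu : Tendsto (fun t : ℝ => exp (t • S) *ᵥ u) l (𝓝 0))
    (hv : Tendsto (fun t : ℝ => exp (t • S) *ᵥ v) l (𝓝 0)) :
    symplForm n u v = 0 := by
  have hcont : Continuous fun p : (Fin (2 * n) → ℝ) × (Fin (2 * n) → ℝ) => symplForm n p.1 p.2 := by
    unfold symplForm; fun_prop
  have h := (hcont.tendsto (0, 0)).comp (hu.prodMk_nhds hv)
  have hinv : ∀ t : ℝ, symplForm n (exp (t • S) *ᵥ u) (exp (t • S) *ᵥ v) = symplForm n u v :=
    fun t => symplForm_mulVec_mulVec (transpose_exp_mul_mul_exp (by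
      rw [transpose_smul, smul_mul_assoc, mul_smul_comm, ← smul_add, hS, smul_zero])) u v
  simp only [Function.comp_def, hinv] at h
  simpa [symplForm] using tendsto_nhds_unique tendsto_const_nhds h

/-- For a hyperbolic Hamiltonian matrix `S`, the unstable space `V⁺(S)` is a Lagrangian
subspace of `(ℝ^{2n}, ω)`, and `ℝ^{2n} = V⁻(S) ⊕ V⁺(S)`. -/
theorem stmt3 (n : ℕ) (S : Matrix (Fin (2*n)) (Fin (2*n)) ℝ)
    (hHam : Sᵀ * Jmat n + Jmat n * S = 0) (hHyp : IsHyperbolic S) :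
    (∀ u ∈ posSpace (2*n) S, ∀ v ∈ posSpace (2*n) S, symplForm n u v = 0) ∧
    Module.finrank ℝ (posSpace (2*n) S) = n ∧
    negSpace (2*n) S ⊓ posSpace (2*n) S = ⊥ ∧
    negSpace (2*n) S ⊔ posSpace (2*n) S = ⊤ := by
  have hneg : ∀ u ∈ negSpace (2*n) S, ∀ v ∈ negSpace (2*n) S, symplForm n u v = 0 :=
    fun _ hu _ hv => symplForm_eq_zero_of_tendsto_s3 hHam hu hv
  have hpos : ∀ u ∈ posSpace (2*n) S, ∀ v ∈ posSpace (2*n) S, symplForm n u v = 0 :=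
    fun _ hu _ hv => symplForm_eq_zero_of_tendsto_s3 hHam hu hv
  have hinf := negSpace_inf_posSpace S
  have hsup := negSpace_sup_posSpace hHyp
  have hdim := Submodule.finrank_add_eq_of_isCompl
    ⟨disjoint_iff.mpr hinf, codisjoint_iff.mpr hsup⟩
  rw [Module.finrank_fin_fun] at hdim
  have := finrank_add_finrank_le_of_isotropic hneg
  have := finrank_add_finrank_le_of_isotropic hpos
  exact ⟨hpos, by omega, hinf, hsup⟩
end

section
/- Let S : ℝ → Mat(2n,ℝ) be continuous with hyperbolic uniform limits S(±∞) at ±∞ (hypothesis (H1) for a single system). Then for every t₁ < t₂ the space of solutions z : [t₁,t₂] → ℝ^{2n} of z'(t) = S(t) z(t) satisfying the boundary conditions z(t₁) ∈ E^u(t₁) and z(t₂) ∈ E^s(t₂) has dimension equal to the dimension of the space of solutions z : ℝ → ℝ^{2n} of z' = S(t)z with z(t) → 0 as t → ±∞; both dimensions equal dim(E^u(0) ∩ E^s(0)). In particular, the restricted boundary value problem on [t₁,t₂] is degenerate if and only if the problem on the whole line is degenerate. -/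
open Matrix Filter Topology

/-- Solutions of the boundary value problem `z' = S(t) z` on `[t₁,t₂]`, `z(t₁) ∈ E₁`,
`z(t₂) ∈ E₂`, regarded as functions on `[t₁,t₂]` admitting a differentiable extension. -/
def bvpSolutions {m : ℕ} (S : ℝ → Matrix (Fin m) (Fin m) ℝ) (t₁ t₂ : ℝ)
    (E₁ E₂ : Submodule ℝ (Fin m → ℝ)) :
    Submodule ℝ (Set.Icc t₁ t₂ → (Fin m → ℝ)) where
  carrier := {z | ∃ Z : ℝ → Fin m → ℝ,
      (∀ s : Set.Icc t₁ t₂, Z s = z s) ∧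
      (∀ t ∈ Set.Icc t₁ t₂, HasDerivWithinAt Z (S t *ᵥ Z t) (Set.Icc t₁ t₂) t) ∧
      Z t₁ ∈ E₁ ∧ Z t₂ ∈ E₂}
  add_mem' := by
    rintro a b ⟨Za, haeq, hade, ha1, ha2⟩ ⟨Zb, hbeq, hbde, hb1, hb2⟩
    refine ⟨Za + Zb, fun s => by simp [haeq s, hbeq s], fun t ht => ?_, ?_, ?_⟩
    · simpa [Matrix.mulVec_add] using (hade t ht).add (hbde t ht)
    · simpa using E₁.add_mem ha1 hb1
    · simpa using E₂.add_mem ha2 hb2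
  zero_mem' := by
    refine ⟨0, fun s => rfl, fun t ht => ?_, E₁.zero_mem, E₂.zero_mem⟩
    show HasDerivWithinAt (fun _ => (0 : Fin m → ℝ)) (S t *ᵥ 0) (Set.Icc t₁ t₂) t
    rw [Matrix.mulVec_zero]
    exact hasDerivWithinAt_const t (Set.Icc t₁ t₂) (0 : Fin m → ℝ)
  smul_mem' := by
    rintro c a ⟨Za, haeq, hade, ha1, ha2⟩
    refine ⟨c • Za, fun s => by simp [haeq s], fun t ht => ?_, ?_, ?_⟩
    · simpa [Matrix.mulVec_smul] using (hade t ht).const_smul c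
    · simpa using E₁.smul_mem c ha1
    · simpa using E₂.smul_mem c ha2

/-- Solutions of `z' = S(t) z` on the whole real line decaying at both ends. -/
def lineSolutions {m : ℕ} (S : ℝ → Matrix (Fin m) (Fin m) ℝ) :
    Submodule ℝ (ℝ → Fin m → ℝ) where
  carrier := {z | (∀ t, HasDerivAt z (S t *ᵥ z t) t) ∧
      Tendsto z atTop (nhds 0) ∧ Tendsto z atBot (nhds 0)}
  add_mem' := by
    rintro a b ⟨hade, hat, hab⟩ ⟨hbde, hbt, hbb⟩
    refine ⟨fun t => ?_, ?_, ?_⟩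
    · simpa [Matrix.mulVec_add] using (hade t).add (hbde t)
    · have h := hat.add hbt; rw [add_zero] at h; exact h
    · have h := hab.add hbb; rw [add_zero] at h; exact h
  zero_mem' := by
    refine ⟨fun t => ?_, tendsto_const_nhds, tendsto_const_nhds⟩
    simpa [Matrix.mulVec_zero] using hasDerivAt_const t (0 : Fin m → ℝ)
  smul_mem' := by
    rintro c a ⟨hade, hat, hab⟩
    refine ⟨fun t => ?_, ?_, ?_⟩
    · simpa [Matrix.mulVec_smul] using (hade t).const_smul c
    · have h := hat.const_smul c; rw [smul_zero] at h; exact h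
    · have h := hab.const_smul c; rw [smul_zero] at h; exact h

/-- The stable subspace `E^s(τ)` of `z' = S(t) z`, via the fundamental solutions `γ τ`. -/
def stableSubmodule {m : ℕ} (γ : ℝ → ℝ → Matrix (Fin m) (Fin m) ℝ) (τ : ℝ) :
    Submodule ℝ (Fin m → ℝ) where
  carrier := {v | Tendsto (fun t => γ τ t *ᵥ v) atTop (nhds 0)}
  add_mem' := by
    intro a b ha hb
    simpa [Matrix.mulVec_add] using ha.add hb
  zero_mem' := by
    simpa [Matrix.mulVec_zero] using
      (tendsto_const_nhds : Tendsto (fun _ : ℝ => (0 : Fin m → ℝ)) atTop (nhds 0))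
  smul_mem' := by
    intro c a ha
    simpa [Matrix.mulVec_smul] using ha.const_smul c

/-- The unstable subspace `E^u(τ)` of `z' = S(t) z`. -/
def unstableSubmodule {m : ℕ} (γ : ℝ → ℝ → Matrix (Fin m) (Fin m) ℝ) (τ : ℝ) :
    Submodule ℝ (Fin m → ℝ) where
  carrier := {v | Tendsto (fun t => γ τ t *ᵥ v) atBot (nhds 0)}
  add_mem' := by
    intro a b ha hb
    simpa [Matrix.mulVec_add] using ha.add hb
  zero_mem' := by
    simpa [Matrix.mulVec_zero] using
      (tendsto_const_nhds : Tendsto (fun _ : ℝ => (0 : Fin m → ℝ)) atBot (nhds 0))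
  smul_mem' := by
    intro c a ha
    simpa [Matrix.mulVec_smul] using ha.const_smul c

/-!
A linear equation `z' = S(t) z` with continuous coefficients has unique solutions, so every
solution, on the line or on an interval, is `t ↦ γ τ t *ᵥ z τ` for any time `τ` of its domain.
Evaluation at `τ` therefore identifies the decaying solutions on the line with
`E^u(τ) ∩ E^s(τ)`, whatever `τ`. The cocycle identity `γ σ t * γ τ σ = γ τ t` gives
`γ τ σ *ᵥ v ∈ E^s(σ) ↔ v ∈ E^s(τ)`; since `z(t₂) = γ t₁ t₂ *ᵥ z(t₁)`, evaluation at `t₁` thus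
identifies the solutions of the boundary value problem with `E^u(t₁) ∩ E^s(t₁)` as well.
-/

open Set

theorem exists_lipschitzWith_mulVec {α ι : Type*} [TopologicalSpace α] [Fintype ι]
    [DecidableEq ι] {S : α → Matrix ι ι ℝ} (hS : Continuous S) {s : Set α}
    (hs : IsCompact s) : ∃ K, ∀ t ∈ s, LipschitzWith K (S t *ᵥ ·) := by
  let L : Matrix ι ι ℝ →ₗ[ℝ] (ι → ℝ) →L[ℝ] (ι → ℝ) :=
    LinearMap.toContinuousLinearMap.toLinearMap ∘ₗ Matrix.toLin'.toLinearMap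
  obtain ⟨K, hK⟩ := hs.bddAbove_image
    (continuous_nnnorm.comp (L.continuous_of_finiteDimensional.comp hS)).continuousOn
  exact ⟨K, fun t ht => (L (S t)).lipschitz.weaken (hK (mem_image_of_mem _ ht))⟩

section LinearODE

variable {m : ℕ} {S : ℝ → Matrix (Fin m) (Fin m) ℝ}

theorem eqOn_Icc_of_hasDerivWithinAt_mulVec (hS : Continuous S) {a b : ℝ}
    {f g : ℝ → Fin m → ℝ}
    (hf : ∀ t ∈ Icc a b, HasDerivWithinAt f (S t *ᵥ f t) (Icc a b) t)
    (hg : ∀ t ∈ Icc a b, HasDerivWithinAt g (S t *ᵥ g t) (Icc a b) t)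
    (ha : f a = g a) : EqOn f g (Icc a b) := by
  obtain ⟨K, hK⟩ := exists_lipschitzWith_mulVec hS (isCompact_Icc (a := a) (b := b))
  have hIci : ∀ {h : ℝ → Fin m → ℝ},
      (∀ t ∈ Icc a b, HasDerivWithinAt h (S t *ᵥ h t) (Icc a b) t) →
      ∀ t ∈ Ico a b, HasDerivWithinAt h (S t *ᵥ h t) (Ici t) t :=
    fun hh t ht => (hh t (Ico_subset_Icc_self ht)).mono_of_mem_nhdsWithin
      (Icc_mem_nhdsGE_of_mem ht)
  exact ODE_solution_unique_of_mem_Icc_right (v := fun t x => S t *ᵥ x) (s := fun _ => univ)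
    (fun t ht => (hK t (Ico_subset_Icc_self ht)).lipschitzOnWith)
    (fun t ht => (hf t ht).continuousWithinAt) (hIci hf) (fun _ _ => mem_univ _)
    (fun t ht => (hg t ht).continuousWithinAt) (hIci hg) (fun _ _ => mem_univ _) ha

theorem eq_of_hasDerivAt_mulVec (hS : Continuous S) {f g : ℝ → Fin m → ℝ}
    (hf : ∀ t, HasDerivAt f (S t *ᵥ f t) t) (hg : ∀ t, HasDerivAt g (S t *ᵥ g t) t)
    {τ : ℝ} (hτ : f τ = g τ) : f = g := by
  funext t
  obtain ⟨K, hK⟩ := exists_lipschitzWith_mulVec hS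
    (isCompact_Icc (a := min τ t - 1) (b := max τ t + 1))
  have hmem : ∀ u, min τ t ≤ u → u ≤ max τ t → u ∈ Ioo (min τ t - 1) (max τ t + 1) :=
    fun u h₁ h₂ => ⟨by linarith, by linarith⟩
  exact ODE_solution_unique_of_mem_Ioo (v := fun t x => S t *ᵥ x) (s := fun _ => univ)
    (fun u hu => (hK u (Ioo_subset_Icc_self hu)).lipschitzOnWith)
    (hmem τ (min_le_left _ _) (le_max_left _ _))
    (fun u _ => ⟨hf u, mem_univ _⟩) (fun u _ => ⟨hg u, mem_univ _⟩) hτ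
    (hmem t (min_le_right _ _) (le_max_right _ _))

end LinearODE

structure IsFundamentalSolution {m : ℕ} (S : ℝ → Matrix (Fin m) (Fin m) ℝ)
    (γ : ℝ → ℝ → Matrix (Fin m) (Fin m) ℝ) : Prop where
  apply_self : ∀ τ, γ τ τ = 1
  hasDerivAt_mulVec : ∀ (τ : ℝ) (v : Fin m → ℝ) (t : ℝ),
    HasDerivAt (fun s => γ τ s *ᵥ v) (S t *ᵥ (γ τ t *ᵥ v)) t

namespace IsFundamentalSolution

variable {m : ℕ} {S : ℝ → Matrix (Fin m) (Fin m) ℝ} {γ : ℝ → ℝ → Matrix (Fin m) (Fin m) ℝ}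

theorem mulVec_apply_self (hγ : IsFundamentalSolution S γ) (τ : ℝ) (v : Fin m → ℝ) :
    γ τ τ *ᵥ v = v := by
  rw [hγ.apply_self, one_mulVec]

theorem eq_mulVec_of_hasDerivAt (hγ : IsFundamentalSolution S γ) (hS : Continuous S)
    {z : ℝ → Fin m → ℝ} (hz : ∀ t, HasDerivAt z (S t *ᵥ z t) t) (τ : ℝ) :
    z = fun t => γ τ t *ᵥ z τ :=
  eq_of_hasDerivAt_mulVec hS hz (hγ.hasDerivAt_mulVec τ (z τ)) (hγ.mulVec_apply_self τ _).symm

theorem eqOn_mulVec_of_hasDerivWithinAt (hγ : IsFundamentalSolution S γ) (hS : Continuous S)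
    {a b : ℝ} {z : ℝ → Fin m → ℝ}
    (hz : ∀ t ∈ Icc a b, HasDerivWithinAt z (S t *ᵥ z t) (Icc a b) t) :
    EqOn z (fun t => γ a t *ᵥ z a) (Icc a b) :=
  eqOn_Icc_of_hasDerivWithinAt_mulVec hS hz
    (fun t _ => (hγ.hasDerivAt_mulVec a (z a) t).hasDerivWithinAt)
    (hγ.mulVec_apply_self a _).symm

theorem mulVec_mulVec (hγ : IsFundamentalSolution S γ) (hS : Continuous S)
    (τ σ t : ℝ) (v : Fin m → ℝ) : γ σ t *ᵥ (γ τ σ *ᵥ v) = γ τ t *ᵥ v :=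
  (congrFun (hγ.eq_mulVec_of_hasDerivAt hS (hγ.hasDerivAt_mulVec τ v) σ) t).symm

theorem mulVec_mem_stableSubmodule_iff (hγ : IsFundamentalSolution S γ) (hS : Continuous S)
    {τ σ : ℝ} {v : Fin m → ℝ} :
    γ τ σ *ᵥ v ∈ stableSubmodule γ σ ↔ v ∈ stableSubmodule γ τ := by
  change Tendsto _ _ _ ↔ Tendsto _ _ _
  simp only [hγ.mulVec_mulVec hS]

noncomputable def lineSolutionsEquiv (hγ : IsFundamentalSolution S γ) (hS : Continuous S)
    (τ : ℝ) : lineSolutions S ≃ₗ[ℝ] ↥(unstableSubmodule γ τ ⊓ stableSubmodule γ τ) where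
  toFun z := ⟨z.1 τ, by
    obtain ⟨hz, hzTop, hzBot⟩ := z.2
    rw [hγ.eq_mulVec_of_hasDerivAt hS hz τ] at hzTop hzBot
    exact ⟨hzBot, hzTop⟩⟩
  map_add' _ _ := rfl
  map_smul' _ _ := rfl
  invFun v := ⟨fun t => γ τ t *ᵥ v, hγ.hasDerivAt_mulVec τ v, v.2.2, v.2.1⟩
  left_inv z := Subtype.ext (hγ.eq_mulVec_of_hasDerivAt hS z.2.1 τ).symm
  right_inv v := Subtype.ext (hγ.mulVec_apply_self τ v)

theorem bvpSolutions_eq_mulVec (hγ : IsFundamentalSolution S γ) (hS : Continuous S)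
    {t₁ t₂ : ℝ} (ht : t₁ ≤ t₂) {E₁ E₂ : Submodule ℝ (Fin m → ℝ)}
    {z : Icc t₁ t₂ → Fin m → ℝ} (hz : z ∈ bvpSolutions S t₁ t₂ E₁ E₂) (s : Icc t₁ t₂) :
    z s = γ t₁ s *ᵥ z ⟨t₁, left_mem_Icc.2 ht⟩ := by
  obtain ⟨Z, hZ, hZ', -⟩ := hz
  rw [← hZ, ← hZ, hγ.eqOn_mulVec_of_hasDerivWithinAt hS hZ' s.2]

noncomputable def bvpSolutionsEquiv (hγ : IsFundamentalSolution S γ) (hS : Continuous S)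
    {t₁ t₂ : ℝ} (ht : t₁ ≤ t₂) :
    bvpSolutions S t₁ t₂ (unstableSubmodule γ t₁) (stableSubmodule γ t₂) ≃ₗ[ℝ]
      ↥(unstableSubmodule γ t₁ ⊓ stableSubmodule γ t₁) where
  toFun z := ⟨z.1 ⟨t₁, left_mem_Icc.2 ht⟩, by
    obtain ⟨Z, hZ, hZ', hZ₁, hZ₂⟩ := z.2
    rw [hγ.eqOn_mulVec_of_hasDerivWithinAt hS hZ' (right_mem_Icc.2 ht),
      hγ.mulVec_mem_stableSubmodule_iff hS] at hZ₂
    exact hZ ⟨t₁, _⟩ ▸ ⟨hZ₁, hZ₂⟩⟩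
  map_add' _ _ := rfl
  map_smul' _ _ := rfl
  invFun v := ⟨fun s => γ t₁ s *ᵥ v, fun t => γ t₁ t *ᵥ v, fun _ => rfl,
    fun t _ => (hγ.hasDerivAt_mulVec t₁ v t).hasDerivWithinAt,
    by simpa only [hγ.mulVec_apply_self] using (Submodule.mem_inf.1 v.2).1,
    (hγ.mulVec_mem_stableSubmodule_iff hS).2 v.2.2⟩
  left_inv z := Subtype.ext (funext fun s => (hγ.bvpSolutions_eq_mulVec hS ht z.2 s).symm)
  right_inv v := Subtype.ext (hγ.mulVec_apply_self t₁ v)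

end IsFundamentalSolution

theorem stmt13_general (n : ℕ) (S : ℝ → Matrix (Fin (2*n)) (Fin (2*n)) ℝ) (hScont : Continuous S)
    (γ : ℝ → ℝ → Matrix (Fin (2*n)) (Fin (2*n)) ℝ)
    (hinit : ∀ τ, γ τ τ = 1)
    (hode : ∀ (τ : ℝ) (v : Fin (2*n) → ℝ) (t : ℝ),
      HasDerivAt (fun s => γ τ s *ᵥ v) (S t *ᵥ (γ τ t *ᵥ v)) t) :
    ∀ t₁ t₂ : ℝ, t₁ < t₂ →
      Module.finrank ℝ
          ↥(bvpSolutions S t₁ t₂ (unstableSubmodule γ t₁) (stableSubmodule γ t₂)) =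
        Module.finrank ℝ ↥(lineSolutions S) ∧
      Module.finrank ℝ ↥(lineSolutions S) =
        Module.finrank ℝ ↥(unstableSubmodule γ 0 ⊓ stableSubmodule γ 0) := by
  intro t₁ t₂ ht
  have hγ : IsFundamentalSolution S γ := ⟨hinit, hode⟩
  exact ⟨((hγ.bvpSolutionsEquiv hScont ht.le).trans
      (hγ.lineSolutionsEquiv hScont t₁).symm).finrank_eq,
    (hγ.lineSolutionsEquiv hScont 0).finrank_eq⟩

/-- Under hypothesis (H1), for any `t₁ < t₂`, the space of solutions of `z' = S(t)z` on
`[t₁,t₂]` with `z(t₁) ∈ E^u(t₁)`, `z(t₂) ∈ E^s(t₂)` has the same dimension as the space of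
solutions on the whole line decaying at `±∞`; both dimensions equal
`dim (E^u(0) ∩ E^s(0))`. -/
theorem stmt13 (n : ℕ) (S : ℝ → Matrix (Fin (2*n)) (Fin (2*n)) ℝ) (hScont : Continuous S)
    (Splus Sminus : Matrix (Fin (2*n)) (Fin (2*n)) ℝ)
    (hplus : IsHyperbolic Splus) (hminus : IsHyperbolic Sminus)
    (hlimplus : Tendsto S atTop (nhds Splus))
    (hlimminus : Tendsto S atBot (nhds Sminus))
    (γ : ℝ → ℝ → Matrix (Fin (2*n)) (Fin (2*n)) ℝ)
    (hinit : ∀ τ, γ τ τ = 1)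
    (hode : ∀ (τ : ℝ) (v : Fin (2*n) → ℝ) (t : ℝ),
      HasDerivAt (fun s => γ τ s *ᵥ v) (S t *ᵥ (γ τ t *ᵥ v)) t) :
    ∀ t₁ t₂ : ℝ, t₁ < t₂ →
      Module.finrank ℝ
          ↥(bvpSolutions S t₁ t₂ (unstableSubmodule γ t₁) (stableSubmodule γ t₂)) =
        Module.finrank ℝ ↥(lineSolutions S) ∧
      Module.finrank ℝ ↥(lineSolutions S) =
        Module.finrank ℝ ↥(unstableSubmodule γ 0 ⊓ stableSubmodule γ 0) :=
  stmt13_general n S hScont γ hinit hode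
end
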